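/- arXiv:2605.06295 — 2 statements merged into one kernel-verified Lean document; each statement's English description precedes it below -/
import Mathlib

section
/- If the metagame ν(K) = φ_i(K ∪ {i}) has Möbius representation m_T(ν) = m_{T∪{i}}(v)/(|T|+1) for T ⊆ [d]\{i}, where m is the Möbius transform of the original game v, then the meta-Shapley value φ_{j→i} equals ∑_{S : i,j ∈ S} m_S(v)/(|S|(|S|-1)) for j ≠ i. -/
/-! The marginal contribution of `j` to the metagame at `S` is
`∑_{T ⊆ S} m_{T ∪ {i,j}}(v) / (|T| + 2)`, so, as a game in `j` over `B = [d] \ {i, j}`, the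
metagame is a combination of unanimity games. The Shapley value of `j` pays each coefficient `a_T`
the total Shapley weight of the coalitions `T ⊆ S ⊆ B`, and
`∑_{T ⊆ S ⊆ B} 1 / ((|B| + 1) C(|B|, |S|)) = 1 / (|T| + 1)`: grouped by `|S|`, the summands are
proportional to `C(|S|, |T|)`, which add up by the hockey-stick identity. -/

open Finset

/-- Möbius transform of a cooperative game. -/
noncomputable def mobius {d : ℕ} (v : Finset (Fin d) → ℝ) (S : Finset (Fin d)) : ℝ :=
  ∑ T ∈ S.powerset, (-1 : ℝ) ^ (S.card - T.card) * v T

/-- First-order Shapley value of `i` restricted to coalition `K` (containing `i`),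
in Möbius representation: `φ_i^{SV}(K) = ∑_{S ⊆ K, i ∈ S} m_S(v)/|S|`. -/
noncomputable def phiSV {d : ℕ} (v : Finset (Fin d) → ℝ) (i : Fin d)
    (K : Finset (Fin d)) : ℝ :=
  ∑ S ∈ K.powerset.filter (fun S => i ∈ S), mobius v S / (S.card : ℝ)

/-- The metagame of `i`: the Shapley attribution of `i` when `i` and `K` are known. -/
noncomputable def metagame {d : ℕ} (v : Finset (Fin d) → ℝ) (i : Fin d)
    (K : Finset (Fin d)) : ℝ :=
  phiSV v i (insert i K)

/-- Meta-Shapley value `φ_{j→i}`: the Shapley value of player `j`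
in the metagame over the players `[d] \ {i}`. -/
noncomputable def metaSV {d : ℕ} (v : Finset (Fin d) → ℝ) (i j : Fin d) : ℝ :=
  ∑ S ∈ ((Finset.univ.erase i).erase j).powerset,
    ((1 : ℝ) / ((d - 1 : ℕ) * ((d - 2 : ℕ).choose S.card))) *
      (metagame v i (insert j S) - metagame v i S)

theorem Nat.sum_range_choose_div_succ_mul_choose_add (m t : ℕ) :
    ∑ k ∈ range (m + 1), (m.choose k : ℝ) / ((m + t + 1) * (m + t).choose (k + t)) =
      1 / (t + 1) := by
  have hchoose : ∀ {a b : ℕ}, b ≤ a → (0 : ℝ) < a.choose b := fun h ↦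
    Nat.cast_pos.2 (Nat.choose_pos h)
  have hterm : ∀ k ∈ range (m + 1), (m.choose k : ℝ) / ((m + t + 1) * (m + t).choose (k + t)) =
      ((k + t).choose t : ℝ) / ((m + t + 1) * (m + t).choose t) := by
    intro k hk
    have hmul :
        ((m + t).choose (k + t) * (k + t).choose t : ℝ) = (m + t).choose t * m.choose k := by
      exact_mod_cast (Nat.choose_mul (Nat.le_add_left t k)).trans (by simp)
    have hpos := hchoose (a := m + t) (b := k + t) (by have := mem_range.1 hk; omega)
    have hpos' := hchoose (a := m + t) (b := t) (by omega)
    rw [div_eq_div_iff (by positivity) (by positivity)]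
    linear_combination (-(m + t + 1 : ℝ)) * hmul
  have hpascal :
      ((m + t + 1 : ℕ) : ℝ) * (m + t).choose t = (m + t + 1).choose (t + 1) * (t + 1) := by
    exact_mod_cast Nat.add_one_mul_choose_eq (m + t) t
  have hpos := hchoose (a := m + t + 1) (b := t + 1) (by omega)
  rw [sum_congr rfl hterm, ← sum_div, ← Nat.cast_sum, Nat.sum_range_add_choose]
  push_cast at hpascal
  rw [hpascal, div_mul_eq_div_div, div_self hpos.ne']

/-- The weight of a coalition of size `s` in the Shapley value of a game on `n + 1` players. -/
noncomputable def shapleyWeight (n s : ℕ) : ℝ :=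
  1 / (((n + 1 : ℕ) : ℝ) * n.choose s)

section

variable {α : Type*} [DecidableEq α]

theorem sum_Icc_shapleyWeight {T B : Finset α} (h : T ⊆ B) :
    ∑ S ∈ Icc T B, shapleyWeight #B #S = 1 / (#T + 1) := by
  have hdisj : ∀ R ∈ (B \ T).powerset, Disjoint T R := fun R hR ↦
    disjoint_sdiff.mono_right (mem_powerset.1 hR)
  have hinj : Set.InjOn (T ∪ ·) (B \ T).powerset := fun R₁ hR₁ R₂ hR₂ hR ↦ by
    rw [← union_sdiff_cancel_left (hdisj R₁ hR₁), ← union_sdiff_cancel_left (hdisj R₂ hR₂)]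
    exact congrArg (· \ T) hR
  rw [Icc_eq_image_powerset h, sum_image hinj,
    sum_congr rfl fun R hR ↦ by rw [card_union_of_disjoint (hdisj R hR), add_comm],
    sum_powerset_apply_card (fun r ↦ shapleyWeight #B (r + #T)),
    ← card_sdiff_add_card_eq_card h, ← Nat.sum_range_choose_div_succ_mul_choose_add]
  refine sum_congr rfl fun k _ ↦ ?_
  simp only [shapleyWeight, nsmul_eq_mul, Nat.cast_add, Nat.cast_one]
  ring

theorem sum_shapleyWeight_mul_sum_powerset (B : Finset α) (a : Finset α → ℝ) :
    ∑ S ∈ B.powerset, shapleyWeight #B #S * ∑ T ∈ S.powerset, a T =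
      ∑ T ∈ B.powerset, a T / (#T + 1) := by
  simp_rw [mul_sum]
  rw [sum_comm' (t' := B.powerset) (s' := fun T ↦ Icc T B) (fun S T ↦ by
    simp only [mem_powerset, mem_Icc]
    exact ⟨fun h ↦ ⟨⟨h.2, h.1⟩, h.2.trans h.1⟩, fun h ↦ ⟨h.1.2, h.1.1⟩⟩)]
  refine sum_congr rfl fun T hT ↦ ?_
  rw [← sum_mul, sum_Icc_shapleyWeight (mem_powerset.1 hT), one_div_mul_eq_div]

theorem sum_powerset_insert_filter_mem {M : Type*} [AddCommMonoid M] {a : α} {s : Finset α}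
    (ha : a ∉ s) (f : Finset α → M) :
    ∑ U ∈ (insert a s).powerset with a ∈ U, f U = ∑ T ∈ s.powerset, f (insert a T) := by
  rw [sum_filter, sum_powerset_insert ha, sum_eq_zero fun T hT ↦
    if_neg fun haT ↦ ha (mem_powerset.1 hT haT), zero_add]
  exact sum_congr rfl fun T _ ↦ if_pos (mem_insert_self a T)

theorem sum_powerset_insert_insert_filter_mem_mem {M : Type*} [AddCommMonoid M] {i j : α}
    {s : Finset α} (hij : i ≠ j) (hi : i ∉ s) (hj : j ∉ s) (f : Finset α → M) :
    ∑ U ∈ (insert i (insert j s)).powerset with (i ∈ U ∧ j ∈ U), f U =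
      ∑ T ∈ s.powerset, f (insert i (insert j T)) := by
  have hi' : i ∉ insert j s := by simp [hij, hi]
  calc ∑ U ∈ (insert i (insert j s)).powerset with (i ∈ U ∧ j ∈ U), f U
      = ∑ U ∈ (insert i (insert j s)).powerset with i ∈ U, if j ∈ U then f U else 0 := by
        simp only [sum_filter, ite_and]
    _ = ∑ T ∈ (insert j s).powerset, if j ∈ insert i T then f (insert i T) else 0 :=
        sum_powerset_insert_filter_mem hi' _
    _ = ∑ T ∈ (insert j s).powerset with j ∈ T, f (insert i T) := by
        simp only [sum_filter, mem_insert, hij.symm, false_or]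
    _ = ∑ T ∈ s.powerset, f (insert i (insert j T)) := sum_powerset_insert_filter_mem hj _

end

theorem metagame_eq_sum_powerset {d : ℕ} (v : Finset (Fin d) → ℝ) {i : Fin d}
    {K : Finset (Fin d)} (hi : i ∉ K) :
    metagame v i K = ∑ T ∈ K.powerset, mobius v (insert i T) / (#T + 1) := by
  rw [metagame, phiSV, sum_powerset_insert_filter_mem hi]
  refine sum_congr rfl fun T hT ↦ ?_
  rw [card_insert_of_notMem fun hiT ↦ hi (mem_powerset.1 hT hiT), Nat.cast_succ]

theorem metagame_insert_sub_metagame {d : ℕ} (v : Finset (Fin d) → ℝ) {i j : Fin d}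
    {S : Finset (Fin d)} (hij : i ≠ j) (hi : i ∉ S) (hj : j ∉ S) :
    metagame v i (insert j S) - metagame v i S =
      ∑ T ∈ S.powerset, mobius v (insert i (insert j T)) / (#T + 2) := by
  rw [metagame_eq_sum_powerset v (by simp [hij, hi]), metagame_eq_sum_powerset v hi,
    sum_powerset_insert hj, add_sub_cancel_left]
  refine sum_congr rfl fun T hT ↦ ?_
  rw [card_insert_of_notMem fun hjT ↦ hj (mem_powerset.1 hT hjT), Nat.cast_succ]
  ring

theorem metaSV_mobius_representation_general {d : ℕ} (v : Finset (Fin d) → ℝ)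
    (i j : Fin d) (hij : i ≠ j) :
    metaSV v i j =
      ∑ S ∈ Finset.univ.powerset.filter (fun S => i ∈ S ∧ j ∈ S),
        mobius v S / ((S.card : ℝ) * ((S.card : ℝ) - 1)) := by
  set B := (univ.erase i).erase j
  have hiB : i ∉ B := fun h ↦ notMem_erase i _ (mem_of_mem_erase h)
  have hjB : j ∉ B := notMem_erase j _
  have huniv : insert i (insert j B) = univ := by
    rw [insert_erase (mem_erase.2 ⟨hij.symm, mem_univ j⟩), insert_erase (mem_univ i)]
  have hd : #B + 2 = d := by
    simpa [card_insert_of_notMem, hij, hiB, hjB] using congrArg card huniv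
  calc metaSV v i j
      = ∑ S ∈ B.powerset, shapleyWeight #B #S *
          ∑ T ∈ S.powerset, mobius v (insert i (insert j T)) / (#T + 2) := by
        refine sum_congr rfl fun S hS ↦ ?_
        have hSB := mem_powerset.1 hS
        rw [metagame_insert_sub_metagame v hij (notMem_mono hSB hiB) (notMem_mono hSB hjB),
          shapleyWeight, show d - 1 = #B + 1 by omega, show d - 2 = #B by omega]
    _ = ∑ T ∈ B.powerset, mobius v (insert i (insert j T)) / (#T + 2) / (#T + 1) :=
        sum_shapleyWeight_mul_sum_powerset B _
    _ = _ := by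
        rw [← huniv, sum_powerset_insert_insert_filter_mem_mem hij hiB hjB]
        refine sum_congr rfl fun T hT ↦ ?_
        have hT := mem_powerset.1 hT
        rw [card_insert_of_notMem (by simp [hij, notMem_mono hT hiB]),
          card_insert_of_notMem (notMem_mono hT hjB), div_div]
        congr 1
        push_cast
        ring

/-- If the metagame has the Möbius representation
`m_T(ν) = m_{T∪{i}}(v)/(|T|+1)`, then the Meta-Shapley value equals
`∑_{S : i,j ∈ S} m_S(v)/(|S|(|S|-1))`. -/
theorem metaSV_mobius_representation {d : ℕ} (v : Finset (Fin d) → ℝ)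
    (i j : Fin d) (hij : i ≠ j)
    (hrep : ∀ K ∈ (Finset.univ.erase i).powerset,
      metagame v i K =
        ∑ T ∈ K.powerset, mobius v (insert i T) / ((T.card : ℝ) + 1)) :
    metaSV v i j =
      ∑ S ∈ Finset.univ.powerset.filter (fun S => i ∈ S ∧ j ∈ S),
        mobius v S / ((S.card : ℝ) * ((S.card : ℝ) - 1)) :=
  metaSV_mobius_representation_general v i j hij
end

section
/- The serial application of integrated gradients (integrated Hessians) to f(x) = x₁ + x₁x₂² leaks interaction into the diagonal: ψ₂,₂^{IH}(x) = (4/9)x₁x₂² ≠ 0, although the pure individual effect of x₂ is zero (the Möbius coefficient m_{{2}} = 0). -/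
/-! Integrated gradients along the second coordinate (zero baseline) ignore every summand that
does not depend on that coordinate, and on a monomial `c a^m b^n` they return the fraction
`n / (m + n)` of it, since the integrand is `c n a^m b^n α^(m+n-1)`. Hence
`φ₂(f) = (2/3) x₁x₂²` and `φ₂(φ₂(f)) = (2/3)² x₁x₂²`, while `v({2}) = f(0, x₂) = 0 = v(∅)`. -/

noncomputable def f (a b : ℝ) : ℝ := a + a * b ^ 2

noncomputable def ig2 (g : ℝ → ℝ → ℝ) (x1 x2 : ℝ) : ℝ :=
  x2 * ∫ α in (0:ℝ)..1, deriv (fun t => g (α * x1) t) (α * x2)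

theorem ig2_const_add (p : ℝ → ℝ) (g : ℝ → ℝ → ℝ) :
    ig2 (fun a b => p a + g a b) = ig2 g := by
  funext x1 x2
  simp only [ig2, deriv_const_add]

theorem ig2_monomial (c : ℝ) (m n : ℕ) (x1 x2 : ℝ) :
    ig2 (fun a b => c * a ^ m * b ^ n) x1 x2 = c * n / (m + n) * x1 ^ m * x2 ^ n := by
  rcases n with _ | k
  · simp [ig2]
  have hderiv : ∀ α : ℝ, deriv (fun t => c * (α * x1) ^ m * t ^ (k + 1)) (α * x2) =
      (c * (k + 1) * x1 ^ m * x2 ^ k) * α ^ (m + k) := by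
    intro α
    rw [deriv_const_mul _ (differentiableAt_pow _), deriv_pow_field, Nat.add_sub_cancel]
    push_cast
    ring
  have hmk : (m + (k + 1) : ℝ) ≠ 0 := by positivity
  simp only [ig2, hderiv, intervalIntegral.integral_const_mul, integral_pow]
  field_simp
  push_cast
  ring

theorem ig2_f : ig2 f = fun a b => 2 / 3 * a ^ 1 * b ^ 2 := by
  funext x1 x2
  have hf : f = fun a b => a + 1 * a ^ 1 * b ^ 2 := by
    funext a b
    simp [f]
  rw [hf, ig2_const_add, ig2_monomial]
  norm_num

noncomputable def maskedGame (x1 x2 : ℝ) (S : Finset (Fin 2)) : ℝ :=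
  f (if 0 ∈ S then x1 else 0) (if 1 ∈ S then x2 else 0)

/-- Integrated Hessians leak interaction into the diagonal:
`ψ₂,₂^{IH}(x) = φ₂^{IG}(φ₂^{IG}(f,·), x) = (4/9)x₁x₂²`, which is nonzero
whenever `x₁x₂ ≠ 0`, even though the pure individual effect of feature 2
vanishes (`m_{{2}} = v({2}) - v(∅) = 0`). -/
theorem integrated_hessian_diagonal_leakage (x1 x2 : ℝ) :
    ig2 (fun a b => ig2 f a b) x1 x2 = (4 / 9) * (x1 * x2 ^ 2) ∧
    (x1 * x2 ≠ 0 → (4 / 9) * (x1 * x2 ^ 2) ≠ 0) ∧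
    maskedGame x1 x2 {1} - maskedGame x1 x2 ∅ = 0 := by
  refine ⟨?_, fun h => ?_, by simp [maskedGame, f]⟩
  · rw [ig2_f, ig2_monomial]
    norm_num
    ring
  · have hx1 : x1 ≠ 0 := left_ne_zero_of_mul h
    have hx2 : x2 ≠ 0 := right_ne_zero_of_mul h
    positivity
end
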